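/- arXiv:1102.3937 — 5 statements merged into one kernel-verified Lean document; each statement's English description precedes it below -/
import Mathlib

section
/- Let N(u), N(v) be finite nonempty sets with sizes N_u, N_v, and r a weight function into [β,1] with β > 0. Then the maximum over all matchings M between N(u) and N(v) of the quantity (1−β)·(∑_{(x,y)∈M} r(x,y))/(N_u + N_v − |M|) + β equals (1−β)·w(𝓜)/max(N_u, N_v) + β, where w(𝓜) is the maximum weight over all matchings. -/
def IsMatching {α β : Type*} (A : Finset α) (B : Finset β) (M : Finset (α × β)) : Prop :=
  (∀ p ∈ M, p.1 ∈ A ∧ p.2 ∈ B) ∧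
  (∀ p ∈ M, ∀ q ∈ M, p.1 = q.1 → p = q) ∧
  (∀ p ∈ M, ∀ q ∈ M, p.2 = q.2 → p = q)

def matchWeight {α β : Type*} (r : α → β → ℝ) (M : Finset (α × β)) : ℝ :=
  ∑ p ∈ M, r p.1 p.2

lemma match_card_le_left {α β : Type*} {A : Finset α} {B : Finset β} {M : Finset (α × β)}
    (hM : IsMatching A B M) : M.card ≤ A.card := by
  classical
  have h : M.card = (M.image Prod.fst).card := by
    rw [Finset.card_image_of_injOn]
    intro p hp q hq hpq
    exact hM.2.1 p hp q hq hpq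
  rw [h]
  apply Finset.card_le_card
  intro a ha
  obtain ⟨p, hp, rfl⟩ := Finset.mem_image.mp ha
  exact (hM.1 p hp).1

lemma match_card_le_right {α β : Type*} {A : Finset α} {B : Finset β} {M : Finset (α × β)}
    (hM : IsMatching A B M) : M.card ≤ B.card := by
  classical
  have h : M.card = (M.image Prod.snd).card := by
    rw [Finset.card_image_of_injOn]
    intro p hp q hq hpq
    exact hM.2.2 p hp q hq hpq
  rw [h]
  apply Finset.card_le_card
  intro a ha
  obtain ⟨p, hp, rfl⟩ := Finset.mem_image.mp ha
  exact (hM.1 p hp).2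

theorem stmt_6 {α β' : Type*} (A : Finset α) (B : Finset β')
    (hA : A.Nonempty) (hB : B.Nonempty)
    (β : ℝ) (hβ : 0 < β) (hβ1 : β < 1)
    (r : α → β' → ℝ)
    (hr : ∀ x ∈ A, ∀ y ∈ B, β ≤ r x y ∧ r x y ≤ 1)
    (wM : ℝ)
    (hwM : IsGreatest {w | ∃ M, IsMatching A B M ∧ w = matchWeight r M} wM) :
    IsGreatest
      {x | ∃ M, IsMatching A B M ∧
        x = (1 - β) * matchWeight r M / ((A.card : ℝ) + B.card - M.card) + β}
      ((1 - β) * wM / (max A.card B.card : ℕ) + β) := by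
  have hwM0 : 0 ≤ wM := by
    have : (0 : ℝ) ∈ {w | ∃ M, IsMatching A B M ∧ w = matchWeight r M} := by
      exact ⟨∅, ⟨by simp, by simp, by simp⟩, by simp [matchWeight]⟩
    exact hwM.2 this
  have hmaxpos : (0 : ℝ) < ((max A.card B.card : ℕ) : ℝ) := by
    have : 0 < A.card := Finset.card_pos.mpr hA
    have : 0 < max A.card B.card := lt_of_lt_of_le this (le_max_left _ _)
    exact_mod_cast this
  classical
  constructor
  · -- membership: take a max-weight matching, show it has card = min
    obtain ⟨M, hM, hw⟩ := hwM.1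
    have hcard : M.card = min A.card B.card := by
      refine le_antisymm (le_min (match_card_le_left hM) (match_card_le_right hM)) ?_
      by_contra h
      push_neg at h
      -- exists unmatched x ∈ A
      have hAlt : (M.image Prod.fst).card < A.card := by
        calc (M.image Prod.fst).card ≤ M.card := Finset.card_image_le
        _ < min A.card B.card := h
        _ ≤ A.card := min_le_left _ _
      have hBlt : (M.image Prod.snd).card < B.card := by
        calc (M.image Prod.snd).card ≤ M.card := Finset.card_image_le
        _ < min A.card B.card := h
        _ ≤ B.card := min_le_right _ _
      have hsubA : M.image Prod.fst ⊆ A := by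
        intro a ha; obtain ⟨p, hp, rfl⟩ := Finset.mem_image.mp ha; exact (hM.1 p hp).1
      have hsubB : M.image Prod.snd ⊆ B := by
        intro b hb; obtain ⟨p, hp, rfl⟩ := Finset.mem_image.mp hb; exact (hM.1 p hp).2
      have hssA : M.image Prod.fst ⊂ A :=
        Finset.ssubset_iff_subset_ne.mpr ⟨hsubA, fun h => by rw [h] at hAlt; exact lt_irrefl _ hAlt⟩
      have hssB : M.image Prod.snd ⊂ B :=
        Finset.ssubset_iff_subset_ne.mpr ⟨hsubB, fun h => by rw [h] at hBlt; exact lt_irrefl _ hBlt⟩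
      obtain ⟨x, hxA, hx⟩ := Finset.exists_of_ssubset hssA
      obtain ⟨y, hyB, hy⟩ := Finset.exists_of_ssubset hssB
      have hxy : (x, y) ∉ M := fun hmem => hx (Finset.mem_image_of_mem Prod.fst hmem)
      have hM' : IsMatching A B (insert (x, y) M) := by
        refine ⟨?_, ?_, ?_⟩
        · intro p hp
          rcases Finset.mem_insert.mp hp with rfl | hp
          · exact ⟨hxA, hyB⟩
          · exact hM.1 p hp
        · intro p hp q hq hpq
          rcases Finset.mem_insert.mp hp with rfl | hp <;>
            rcases Finset.mem_insert.mp hq with rfl | hq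
          · rfl
          · exact absurd (Finset.mem_image.mpr ⟨q, hq, hpq.symm⟩) hx
          · exact absurd (Finset.mem_image.mpr ⟨p, hp, hpq⟩) hx
          · exact hM.2.1 p hp q hq hpq
        · intro p hp q hq hpq
          rcases Finset.mem_insert.mp hp with rfl | hp <;>
            rcases Finset.mem_insert.mp hq with rfl | hq
          · rfl
          · exact absurd (Finset.mem_image.mpr ⟨q, hq, hpq.symm⟩) hy
          · exact absurd (Finset.mem_image.mpr ⟨p, hp, hpq⟩) hy
          · exact hM.2.2 p hp q hq hpq
      have hle : matchWeight r (insert (x, y) M) ≤ wM :=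
        hwM.2 ⟨insert (x, y) M, hM', rfl⟩
      have : matchWeight r (insert (x, y) M) = r x y + matchWeight r M := by
        simp [matchWeight, Finset.sum_insert hxy]
      have hrxy : β ≤ r x y := (hr x hxA y hyB).1
      rw [this, ← hw] at hle
      linarith
    refine ⟨M, hM, ?_⟩
    have hden : (A.card : ℝ) + B.card - M.card = ((max A.card B.card : ℕ) : ℝ) := by
      rw [hcard]
      rcases le_total A.card B.card with h | h
      · rw [min_eq_left h, max_eq_right h]; ring
      · rw [min_eq_right h, max_eq_left h]; ring
    rw [hden, hw]
  · -- upper bound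
    rintro z ⟨M, hM, rfl⟩
    set n := A.card
    set m := B.card
    have hcardle : M.card ≤ min n m := le_min (match_card_le_left hM) (match_card_le_right hM)
    have hDmax : ((max n m : ℕ) : ℝ) ≤ (n : ℝ) + m - M.card := by
      have h1 : min n m + max n m = n + m := min_add_max n m
      have h2 : (M.card : ℝ) ≤ (min n m : ℕ) := by exact_mod_cast hcardle
      have h3 : ((min n m : ℕ) : ℝ) + ((max n m : ℕ) : ℝ) = (n : ℝ) + m := by
        exact_mod_cast h1
      linarith
    have hD0 : (0 : ℝ) < (n : ℝ) + m - M.card := lt_of_lt_of_le hmaxpos hDmax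
    have hWle : matchWeight r M ≤ wM := hwM.2 ⟨M, hM, rfl⟩
    have key : matchWeight r M / ((n : ℝ) + m - M.card) ≤ wM / ((max n m : ℕ) : ℝ) := by
      rw [div_le_div_iff₀ hD0 hmaxpos]
      nlinarith
    have h1β : (0 : ℝ) ≤ 1 - β := by linarith
    calc (1 - β) * matchWeight r M / ((n : ℝ) + m - M.card) + β
        = (1 - β) * (matchWeight r M / ((n : ℝ) + m - M.card)) + β := by ring
      _ ≤ (1 - β) * (wM / ((max n m : ℕ) : ℝ)) + β := by
          have := mul_le_mul_of_nonneg_left key h1β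
          linarith
      _ = (1 - β) * wM / ((max n m : ℕ) : ℝ) + β := by ring
end

section
/- (Pruning Rule 1) Let 0 < β < 1, 0 < θ < 1 with θ > β, and θ' = (θ − β)/(1 − β). If N_u ≥ N_v ≥ 1 and N_v < θ'·N_u, and all pairwise weights lie in [β,1], then R(u,v) = (1−β)·w(𝓜)/N_u + β < θ. -/
theorem stmt_8 (β θ : ℝ) (hβ : 0 < β) (hβ1 : β < 1)
    (hθ0 : 0 < θ) (hθ1 : θ < 1) (hθβ : β < θ)
    (θ' : ℝ) (hθ' : θ' = (θ - β) / (1 - β))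
    (Nu Nv : ℕ) (hNuv : Nv ≤ Nu) (hNv : 1 ≤ Nv)
    (wM : ℝ) (hw0 : 0 ≤ wM) (hw : wM ≤ (Nv : ℝ))
    (hprune : (Nv : ℝ) < θ' * Nu) :
    (1 - β) * wM / (Nu : ℝ) + β < θ := by
  have hNu : (0:ℝ) < Nu := by
    have : 1 ≤ Nu := le_trans hNv hNuv
    exact_mod_cast this
  have h1β : (0:ℝ) < 1 - β := by linarith
  have hwlt : wM < θ' * Nu := lt_of_le_of_lt hw hprune
  have hθ'val : θ' * (1 - β) = θ - β := by
    rw [hθ']; field_simp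
  have : (1 - β) * wM < (θ - β) * Nu := by
    calc (1 - β) * wM < (1 - β) * (θ' * Nu) := by
          exact (mul_lt_mul_iff_right₀ h1β).2 hwlt
      _ = (θ - β) * Nu := by rw [← hθ'val]; ring
  rw [div_add' _ _ _ (ne_of_gt hNu), div_lt_iff₀ hNu]
  nlinarith
end

section
/- If nodes u and v are automorphically equivalent in a finite simple graph (so there is a bijection σ : N(u) → N(v)) and the current similarity function R^k satisfies R^k(x, σ(x)) = 1 for all x ∈ N(u), with all values of R^k in [0,1], then the updated value R^{k+1}(u,v) = (1−β)·w(𝓜)/max(N_u,N_v) + β equals 1, where w(𝓜) is the maximum weight matching between N(u) and N(v) under weights R^k. -/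
/-!
The graph `{(x, σ x) | x ∈ A}` of the bijection is a matching of weight `|A|`, while no matching
can weigh more than `|A|` since it has at most `|A|` edges, each of weight at most `1`. So the
maximum matching weight is `|A| = max |A| |B|`, and the update returns `(1 - β) + β = 1`.
-/

namespace IsMatching

variable {α β : Type*} {A : Finset α} {B : Finset β} {M : Finset (α × β)}

theorem card_le_left (hM : IsMatching A B M) : M.card ≤ A.card :=
  Finset.card_le_card_of_injOn Prod.fst (fun p hp => (hM.1 p hp).1)
    (fun p hp q hq h => hM.2.1 p hp q hq h)

end IsMatching

section Graph

variable {α β : Type*} [DecidableEq α] [DecidableEq β] {A : Finset α} {B : Finset β} {σ : α → β}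

theorem isMatching_image_graph (hmaps : Set.MapsTo σ A B) (hinj : Set.InjOn σ A) :
    IsMatching A B (A.image fun x => (x, σ x)) := by
  simp only [IsMatching, Finset.forall_mem_image, Prod.mk.injEq]
  exact ⟨fun x hx => ⟨hx, hmaps hx⟩, fun x _ y _ h => ⟨h, h ▸ rfl⟩,
    fun x hx y hy h => ⟨hinj hx hy h, h⟩⟩

theorem matchWeight_image_graph (r : α → β → ℝ) :
    matchWeight r (A.image fun x => (x, σ x)) = ∑ x ∈ A, r x (σ x) :=
  Finset.sum_image fun _ _ _ _ h => (Prod.mk.inj h).1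

end Graph

theorem matchWeight_le_card {α β : Type*} {r : α → β → ℝ} (hr : ∀ x y, r x y ≤ 1)
    (M : Finset (α × β)) : matchWeight r M ≤ M.card := by
  simpa [matchWeight] using Finset.sum_le_sum fun (p : α × β) _ => hr p.1 p.2

theorem IsGreatest.matchWeight_eq_card {α β : Type*} {A : Finset α} {B : Finset β}
    {σ : α → β} (hσ : Set.BijOn σ A B) {r : α → β → ℝ} (hr : ∀ x y, r x y ≤ 1)
    (hone : ∀ x ∈ A, r x (σ x) = 1) {w : ℝ}
    (hw : IsGreatest {w | ∃ M, IsMatching A B M ∧ w = matchWeight r M} w) :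
    w = A.card := by
  classical
  obtain ⟨⟨M, hM, rfl⟩, hmax⟩ := hw
  refine le_antisymm ((matchWeight_le_card hr M).trans (mod_cast hM.card_le_left)) ?_
  have hgraph : matchWeight r (A.image fun x => (x, σ x)) = A.card := by
    rw [matchWeight_image_graph, Finset.sum_congr rfl hone]
    simp
  exact hgraph ▸ hmax ⟨_, isMatching_image_graph hσ.mapsTo hσ.injOn, rfl⟩

theorem stmt_10_general {α : Type*} (A B : Finset α) (hA : A.Nonempty)
    (σ : α → α) (hσ : Set.BijOn σ ↑A ↑B)
    (β : ℝ)
    (Rk : α → α → ℝ)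
    (hRk : ∀ x y, 0 ≤ Rk x y ∧ Rk x y ≤ 1)
    (hone : ∀ x ∈ A, Rk x (σ x) = 1)
    (wM : ℝ)
    (hwM : IsGreatest {w | ∃ M, IsMatching A B M ∧ w = matchWeight Rk M} wM) :
    (1 - β) * wM / (max A.card B.card : ℕ) + β = 1 := by
  have hwA : wM = A.card := hwM.matchWeight_eq_card hσ (fun x y => (hRk x y).2) hone
  have hA₀ : (A.card : ℝ) ≠ 0 := mod_cast hA.card_pos.ne'
  rw [hwA, ← hσ.finsetCard_eq, max_self, mul_div_assoc, div_self hA₀]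
  ring

theorem stmt_10 {α : Type*} (A B : Finset α) (hA : A.Nonempty)
    (σ : α → α) (hσ : Set.BijOn σ ↑A ↑B)
    (β : ℝ) (hβ : 0 < β) (hβ1 : β < 1)
    (Rk : α → α → ℝ)
    (hRk : ∀ x y, 0 ≤ Rk x y ∧ Rk x y ≤ 1)
    (hone : ∀ x ∈ A, Rk x (σ x) = 1)
    (wM : ℝ)
    (hwM : IsGreatest {w | ∃ M, IsMatching A B M ∧ w = matchWeight Rk M} wM) :
    (1 - β) * wM / (max A.card B.card : ℕ) + β = 1 :=
  stmt_10_general A B hA σ hσ β Rk hRk hone wM hwM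
end

section
/- (Convergence of RoleSim iteration) Let the iteration be R^{k+1}(u,v) = (1−β)·w_k(u,v)/max(N_u,N_v) + β, where w_k(u,v) is the maximum weight of a matching between N(u) and N(v) under weights R^k. If D_k denotes the maximum over all pairs (u,v) of |R^{k+1}(u,v) − R^k(u,v)|, then D_{k+1} ≤ (1−β)·D_k; consequently D_k ≤ (1−β)^k·D_0 → 0 and the iteration converges for every pair. -/
section Matching

variable {α β : Type*} {A : Finset α} {B : Finset β}

def matchWeights (A : Finset α) (B : Finset β) (r : α → β → ℝ) : Set ℝ :=
  {x | ∃ M, IsMatching A B M ∧ x = matchWeight r M}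

theorem IsMatching.card_le_left_s12 {M : Finset (α × β)} (hM : IsMatching A B M) :
    M.card ≤ A.card :=
  Finset.card_le_card_of_injOn Prod.fst (fun p hp => (hM.1 p hp).1)
    (fun p hp q hq => hM.2.1 p hp q hq)

theorem matchWeight_sub_le (r s : α → β → ℝ) (M : Finset (α × β)) {C : ℝ}
    (hC : ∀ a b, r a b - s a b ≤ C) :
    matchWeight r M - matchWeight s M ≤ M.card * C := by
  calc matchWeight r M - matchWeight s M = ∑ p ∈ M, (r p.1 p.2 - s p.1 p.2) :=
        (Finset.sum_sub_distrib _ _).symm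
    _ ≤ ∑ _p ∈ M, C := Finset.sum_le_sum fun p _ => hC p.1 p.2
    _ = M.card * C := by rw [Finset.sum_const, nsmul_eq_mul]

theorem IsGreatest.sub_le_of_matchWeights {r s : α → β → ℝ} {C x y : ℝ} (hC₀ : 0 ≤ C)
    (hC : ∀ a b, r a b - s a b ≤ C)
    (hx : IsGreatest (matchWeights A B r) x) (hy : IsGreatest (matchWeights A B s) y) :
    x - y ≤ A.card * C := by
  obtain ⟨M, hM, rfl⟩ := hx.1
  have hcard : (M.card : ℝ) ≤ A.card := by exact_mod_cast hM.card_le_left_s12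
  calc matchWeight r M - y ≤ matchWeight r M - matchWeight s M := by
        gcongr; exact hy.2 ⟨M, hM, rfl⟩
    _ ≤ M.card * C := matchWeight_sub_le r s M hC
    _ ≤ A.card * C := by gcongr

theorem IsGreatest.abs_sub_le_of_matchWeights {r s : α → β → ℝ} {C x y : ℝ} (hC₀ : 0 ≤ C)
    (hC : ∀ a b, |r a b - s a b| ≤ C)
    (hx : IsGreatest (matchWeights A B r) x) (hy : IsGreatest (matchWeights A B s) y) :
    |x - y| ≤ A.card * C :=
  abs_sub_le_iff.2
    ⟨hx.sub_le_of_matchWeights hC₀ (fun a b => (le_abs_self _).trans (hC a b)) hy,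
      hy.sub_le_of_matchWeights hC₀
        (fun a b => (le_abs_self _).trans ((abs_sub_comm _ _).trans_le (hC a b))) hx⟩

end Matching

-- `m = 0` is allowed, since then both quotients are the junk value `0`.
theorem abs_mul_div_add_sub_le {c m d x y b : ℝ} (hc : 0 ≤ c) (hm : 0 ≤ m) (hd : 0 ≤ d)
    (h : |x - y| ≤ m * d) :
    |(c * x / m + b) - (c * y / m + b)| ≤ c * d := by
  have hrw : (c * x / m + b) - (c * y / m + b) = c * (x - y) / m := by ring
  rw [hrw, abs_div, abs_mul, abs_of_nonneg hc, abs_of_nonneg hm]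
  exact div_le_of_le_mul₀ hm (mul_nonneg hc hd) (by nlinarith [abs_nonneg (x - y)])

theorem stmt_12_general {V : Type*} [Fintype V] (G : SimpleGraph V) [DecidableRel G.Adj]
    (β : ℝ) (hβ : 0 < β) (hβ1 : β < 1)
    (R : ℕ → V → V → ℝ)
    (w : ℕ → V → V → ℝ)
    (hw : ∀ k u v, IsGreatest
      {x | ∃ M, IsMatching (G.neighborFinset u) (G.neighborFinset v) M ∧
        x = matchWeight (R k) M} (w k u v))
    (hiter : ∀ k u v,
      R (k + 1) u v = (1 - β) * w k u v / (max (G.degree u) (G.degree v) : ℕ) + β)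
    (D : ℕ → ℝ)
    (hD : ∀ k, IsGreatest {x | ∃ u v : V, x = |R (k + 1) u v - R k u v|} (D k)) :
    (∀ k, D (k + 1) ≤ (1 - β) * D k) ∧
    (∀ k, D k ≤ (1 - β) ^ k * D 0) ∧
    (∀ u v : V, ∃ L : ℝ, Filter.Tendsto (fun k => R k u v) Filter.atTop (nhds L)) := by
  have hD₀ : ∀ k, 0 ≤ D k := fun k => by
    obtain ⟨u, v, h⟩ := (hD k).1
    exact h ▸ abs_nonneg _
  have hRD : ∀ k u v, |R (k + 1) u v - R k u v| ≤ D k := fun k u v => (hD k).2 ⟨u, v, rfl⟩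
  have hstep : ∀ k, D (k + 1) ≤ (1 - β) * D k := by
    intro k
    obtain ⟨u, v, hDk⟩ := (hD (k + 1)).1
    have hwk : |w (k + 1) u v - w k u v| ≤ (max (G.degree u) (G.degree v) : ℕ) * D k := by
      refine ((hw (k + 1) u v).abs_sub_le_of_matchWeights (hD₀ k) (hRD k) (hw k u v)).trans ?_
      rw [G.card_neighborFinset_eq_degree]
      gcongr
      · exact hD₀ k
      · exact le_max_left _ _
    rw [hDk, hiter (k + 1) u v, hiter k u v]
    exact abs_mul_div_add_sub_le (by linarith) (Nat.cast_nonneg _) (hD₀ k) hwk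
  have hgeo : ∀ k, D k ≤ (1 - β) ^ k * D 0 := fun k =>
    le_geom (by linarith) k fun j _ => hstep j
  refine ⟨hstep, hgeo, fun u v => cauchySeq_tendsto_of_complete ?_⟩
  refine cauchySeq_of_le_geometric (1 - β) (D 0) (by linarith) fun n => ?_
  rw [Real.dist_eq, abs_sub_comm, mul_comm]
  exact (hRD n u v).trans (hgeo n)

theorem stmt_12 {V : Type*} [Fintype V] (G : SimpleGraph V) [DecidableRel G.Adj]
    (hnbr : ∀ v : V, (G.neighborFinset v).Nonempty)
    (β : ℝ) (hβ : 0 < β) (hβ1 : β < 1)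
    (R : ℕ → V → V → ℝ)
    (hR0 : ∀ u v, β ≤ R 0 u v ∧ R 0 u v ≤ 1)
    (w : ℕ → V → V → ℝ)
    (hw : ∀ k u v, IsGreatest
      {x | ∃ M, IsMatching (G.neighborFinset u) (G.neighborFinset v) M ∧
        x = matchWeight (R k) M} (w k u v))
    (hiter : ∀ k u v,
      R (k + 1) u v = (1 - β) * w k u v / (max (G.degree u) (G.degree v) : ℕ) + β)
    (D : ℕ → ℝ)
    (hD : ∀ k, IsGreatest {x | ∃ u v : V, x = |R (k + 1) u v - R k u v|} (D k)) :
    (∀ k, D (k + 1) ≤ (1 - β) * D k) ∧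
    (∀ k, D k ≤ (1 - β) ^ k * D 0) ∧
    (∀ u v : V, ∃ L : ℝ, Filter.Tendsto (fun k => R k u v) Filter.atTop (nhds L)) :=
  stmt_12_general G β hβ hβ1 R w hw hiter D hD
end

section
/- In the SimRank odd-distance pathology: for any graph G in which every walk from u to v has odd length (e.g., G is bipartite with u and v in different parts), the SimRank fixed point satisfies SR(u,v) = 0, even if u and v are automorphically equivalent. Concretely, for the path graph on 3 vertices a—b—c, the SimRank value of the pair (a,b) is 0 although a and c are automorphically equivalent to each other via the reflection. -/
theorem stmt_18 (β : ℝ) (hβ : 0 < β) (hβ1 : β < 1)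
    (G : SimpleGraph (Fin 3)) [DecidableRel G.Adj]
    (hG : ∀ x y, G.Adj x y ↔
      (x = 0 ∧ y = 1) ∨ (x = 1 ∧ y = 0) ∨ (x = 1 ∧ y = 2) ∨ (x = 2 ∧ y = 1))
    (SR : Fin 3 → Fin 3 → ℝ)
    (hdiag : ∀ v, SR v v = 1)
    (hoff : ∀ u v, u ≠ v →
      SR u v = (1 - β) / ((G.degree u : ℝ) * (G.degree v : ℝ)) *
        ∑ x ∈ G.neighborFinset u, ∑ y ∈ G.neighborFinset v, SR x y) :
    SR 0 1 = 0 ∧ ∃ σ : G ≃g G, σ 0 = 2 := by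
  have hn0 : G.neighborFinset (0 : Fin 3) = {1} := by
    ext y; fin_cases y <;> simp [SimpleGraph.mem_neighborFinset, hG]
  have hn1 : G.neighborFinset (1 : Fin 3) = {0, 2} := by
    ext y; fin_cases y <;> simp [SimpleGraph.mem_neighborFinset, hG]
  have hn2 : G.neighborFinset (2 : Fin 3) = {1} := by
    ext y; fin_cases y <;> simp [SimpleGraph.mem_neighborFinset, hG]
  have hd0 : G.degree (0 : Fin 3) = 1 := by simp [SimpleGraph.degree, hn0]
  have hd1 : G.degree (1 : Fin 3) = 2 := by simp [SimpleGraph.degree, hn1]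
  have hd2 : G.degree (2 : Fin 3) = 1 := by simp [SimpleGraph.degree, hn2]
  set k : ℝ := (1 - β) / 2 with hk
  have e01 := hoff 0 1 (by decide)
  have e10 := hoff 1 0 (by decide)
  have e12 := hoff 1 2 (by decide)
  have e21 := hoff 2 1 (by decide)
  rw [hn0, hn1, hd0, hd1] at e01
  rw [hn1, hn0, hd1, hd0] at e10
  rw [hn1, hn2, hd1, hd2] at e12
  rw [hn2, hn1, hd2, hd1] at e21
  simp only [Finset.sum_insert (by decide : (0:Fin 3) ∉ ({2} : Finset (Fin 3))),
    Finset.sum_singleton] at e01 e10 e12 e21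
  push_cast at e01 e10 e12 e21
  constructor
  · have hbc : SR 1 0 = SR 1 2 := by rw [e10, e12]
    have had : SR 0 1 = SR 2 1 := by rw [e01, e21]
    have h1 : SR 0 1 = (1 - β) * SR 1 0 := by rw [e01, ← hbc]; ring
    have h2 : SR 1 0 = (1 - β) * SR 0 1 := by rw [e10, ← had]; ring
    have h3 : (1 - (1 - β) ^ 2) * SR 0 1 = 0 := by
      linear_combination h1 + (1 - β) * h2
    have hpos : 1 - (1 - β) ^ 2 ≠ 0 := by nlinarith
    exact (mul_eq_zero.mp h3).resolve_left hpos
  · refine ⟨⟨Equiv.swap 0 2, ?_⟩, Equiv.swap_apply_left 0 2⟩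
    intro a b
    fin_cases a <;> fin_cases b <;> rw [hG, hG] <;> decide
end
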